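/- For any $w \in S_\mathbb{Z}$, the Stanley symmetric function satisfies the coproduct formula $\Delta(F_w) = \sum_{(u,v)} F_u \otimes F_v$, where the sum is over pairs with $w = uv$ and $\ell(w) = \ell(u) + \ell(v)$, and $\Delta$ is the standard coproduct of the Hopf algebra of symmetric functions. -/

import Mathlib

/-- The group `S_ℤ` of permutations of `ℤ` moving only finitely many elements. -/
def SZ : Subgroup (Equiv.Perm ℤ) where
  carrier := {w | {i : ℤ | w i ≠ i}.Finite}
  one_mem' := by
    have h : {i : ℤ | (1 : Equiv.Perm ℤ) i ≠ i} = ∅ := by ext i; simp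
    show ({i : ℤ | (1 : Equiv.Perm ℤ) i ≠ i}).Finite
    rw [h]; exact Set.finite_empty
  mul_mem' := by
    intro a b ha hb
    show ({i : ℤ | (a * b) i ≠ i}).Finite
    refine (Set.Finite.union ha hb).subset ?_
    intro j hj
    simp only [Set.mem_setOf_eq] at hj
    by_contra hc
    simp only [Set.mem_union, Set.mem_setOf_eq, not_or, not_not] at hc
    exact hj (by rw [Equiv.Perm.mul_apply, hc.2, hc.1])
  inv_mem' := by
    intro a ha
    show ({i : ℤ | a⁻¹ i ≠ i}).Finite
    have h : {i : ℤ | a⁻¹ i ≠ i} = {i : ℤ | a i ≠ i} := by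
      ext i
      simp only [Set.mem_setOf_eq, ne_eq, Equiv.Perm.inv_eq_iff_eq]
      exact not_congr eq_comm
    rw [h]; exact ha

/-- The simple transposition `s_i = (i, i+1)` as an element of `S_ℤ`. -/
def sZ (i : ℤ) : SZ :=
  ⟨Equiv.swap i (i + 1), by
    show ({j : ℤ | Equiv.swap i (i + 1) j ≠ j}).Finite
    refine ((Set.finite_singleton (i + 1)).insert i).subset ?_
    intro j hj
    simp only [Set.mem_setOf_eq] at hj
    by_contra hc
    simp only [Set.mem_insert_iff, Set.mem_singleton_iff, not_or] at hc
    exact hj (Equiv.swap_apply_of_ne_of_ne hc.1 hc.2)⟩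

/-- Coxeter length of `w ∈ S_ℤ` = its number of inversions. -/
noncomputable def lenZ (w : SZ) : ℕ :=
  Nat.card {p : ℤ × ℤ | p.1 < p.2 ∧ (w : Equiv.Perm ℤ) p.2 < (w : Equiv.Perm ℤ) p.1}

/-- `l` is a reduced word for `w`: `w = s_{l 0} ⋯ s_{l (len-1)}` with
`len = ℓ(w)`. -/
def IsRedWord (w : SZ) (l : List ℤ) : Prop :=
  l.length = lenZ w ∧ (l.map sZ).prod = w

/-- `(a, b)` is a compatible pair: `b` is weakly increasing, strictly at ascents
of `a`. -/
def Compatible {σ : Type} [LinearOrder σ] (a : List ℤ) (b : List σ) : Prop :=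
  a.length = b.length ∧
    List.Chain' (fun p q : ℤ × σ => p.2 ≤ q.2 ∧ (p.1 < q.1 → p.2 < q.2)) (a.zip b)

/-- The content of a list of variables, as a monomial exponent vector. -/
noncomputable def content {σ : Type} (b : List σ) : σ →₀ ℕ :=
  (b.map fun i => Finsupp.single i 1).sum

/-- The coefficient of the monomial `x^m` in the Stanley symmetric function
`F_w` computed in the ordered alphabet `σ`: the number of pairs of a reduced
word for `w` and a compatible sequence with content `m`. -/
noncomputable def stanleyCoeff (σ : Type) [LinearOrder σ] (w : SZ) (m : σ →₀ ℕ) : ℕ :=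
  Nat.card {p : List ℤ × List σ // IsRedWord w p.1 ∧ Compatible p.1 p.2 ∧ content p.2 = m}

/-- The alphabet `x_0, x_{-1}, x_{-2}, …` of nonpositive variables. -/
abbrev NP := {i : ℤ // i ≤ 0}

/-- Two copies of the nonpositive alphabet, the first ordered entirely below
the second. -/
abbrev NP2 := Lex (NP ⊕ NP)

/-- A monomial in the first copy of the alphabet. -/
noncomputable def emb1 (m : NP →₀ ℕ) : NP2 →₀ ℕ :=
  m.mapDomain (fun i => toLex (Sum.inl i))

/-- A monomial in the second copy of the alphabet. -/
noncomputable def emb2 (m : NP →₀ ℕ) : NP2 →₀ ℕ :=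
  m.mapDomain (fun i => toLex (Sum.inr i))

/-!
Over the doubled alphabet `NP2`, in which every letter of the first copy precedes every letter of
the second, a compatible sequence is weakly increasing, so it is a compatible sequence in the first
copy followed by one in the second. Cutting the reduced word at the same place writes `w = u v`,
with `u` and `v` the products of the two halves. Lengths are inversion counts, so
`ℓ(s_i u) = ℓ(u) ± 1` and `ℓ` is subadditive; hence both halves are reduced and
`ℓ(w) = ℓ(u) + ℓ(v)`. Concatenation undoes the cut, which identifies the pairs counted by the
coefficient of `F_w` with the disjoint union, over length-additive factorizations `w = u v`, of the
products of the pairs counted by `F_u` and `F_v`. These sets are finite because the first letter of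
a reduced word of `w` is one of the finitely many left descents of `w`.
-/

theorem Nat.card_sigma_eq_finsum {ι : Type*} {β : ι → Type*} [Finite (Σ i, β i)] :
    Nat.card (Σ i, β i) = ∑ᶠ i, Nat.card (β i) := by
  classical
  set s := (Set.finite_range (Sigma.fst : (Σ i, β i) → ι)).toFinset
  have hmem (i : ι) (b : β i) : i ∈ s := Set.Finite.mem_toFinset _ |>.2 ⟨⟨i, b⟩, rfl⟩
  have hsupp : Function.support (fun i => Nat.card (β i)) ⊆ s := fun i hi =>
    hmem i (Nat.card_ne_zero.1 hi).1.some
  have (i : ι) : Finite (β i) := Finite.of_injective (Sigma.mk i) sigma_mk_injective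
  rw [finsum_eq_sum_of_support_subset _ hsupp, ← Finset.sum_coe_sort s, ← Nat.card_sigma]
  exact Nat.card_congr (Equiv.sigmaSubtypeEquivOfSubset β (· ∈ s) hmem).symm

def inversions (w : SZ) : Set (ℤ × ℤ) :=
  {p | p.1 < p.2 ∧ (w : Equiv.Perm ℤ) p.2 < (w : Equiv.Perm ℤ) p.1}

lemma lenZ_eq_ncard_inversions (w : SZ) : lenZ w = (inversions w).ncard :=
  Nat.card_coe_set_eq _

lemma inversions_finite (w : SZ) : (inversions w).Finite := by
  have hsupp : {i : ℤ | (w : Equiv.Perm ℤ) i ≠ i}.Finite := w.2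
  obtain ⟨lo, hlo⟩ := hsupp.bddBelow
  obtain ⟨hi, hhi⟩ := hsupp.bddAbove
  -- a moved point is sent to a moved point, so both lie in `[lo, hi]`
  have bound : ∀ i, (w : Equiv.Perm ℤ) i = i ∨
      (lo ≤ i ∧ i ≤ hi ∧ lo ≤ (w : Equiv.Perm ℤ) i ∧ (w : Equiv.Perm ℤ) i ≤ hi) := by
    intro i
    refine or_iff_not_imp_left.2 fun hi' => ?_
    have hwi : (w : Equiv.Perm ℤ) ((w : Equiv.Perm ℤ) i) ≠ (w : Equiv.Perm ℤ) i :=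
      (w : Equiv.Perm ℤ).injective.ne hi'
    exact ⟨hlo hi', hhi hi', hlo hwi, hhi hwi⟩
  refine ((Set.finite_Icc lo hi).prod (Set.finite_Icc lo hi)).subset ?_
  rintro ⟨x, y⟩ ⟨hxy, hw⟩
  have := bound x
  have := bound y
  simp only [Set.mem_prod, Set.mem_Icc] at *
  omega

lemma lenZ_one : lenZ 1 = 0 := by
  have : inversions 1 = ∅ :=
    Set.eq_empty_of_forall_notMem fun p hp => hp.1.not_gt hp.2
  rw [lenZ_eq_ncard_inversions, this, Set.ncard_empty]

lemma lenZ_mul_le (u v : SZ) : lenZ (u * v) ≤ lenZ u + lenZ v := by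
  set f := Equiv.prodCongr (v : Equiv.Perm ℤ) (v : Equiv.Perm ℤ)
  -- an inversion of `u * v` is either an inversion of `v` or is carried by `v` to one of `u`
  have hsub : inversions (u * v) ⊆ inversions v ∪ f ⁻¹' inversions u := by
    rintro ⟨x, y⟩ ⟨hxy, huv⟩
    rcases lt_or_gt_of_ne ((v : Equiv.Perm ℤ).injective.ne hxy.ne) with h | h
    · exact Or.inr ⟨h, huv⟩
    · exact Or.inl ⟨hxy, h⟩
  have hpre : (f ⁻¹' inversions u).ncard = (inversions u).ncard :=
    Set.ncard_preimage_of_injective_subset_range f.injective (by simp)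
  calc lenZ (u * v) ≤ (inversions v ∪ f ⁻¹' inversions u).ncard := by
        rw [lenZ_eq_ncard_inversions]
        exact Set.ncard_le_ncard hsub
          ((inversions_finite v).union ((inversions_finite u).preimage f.injective.injOn))
    _ ≤ lenZ u + lenZ v := by
        rw [lenZ_eq_ncard_inversions, lenZ_eq_ncard_inversions]
        have := Set.ncard_union_le (inversions v) (f ⁻¹' inversions u)
        omega

section SimpleTransposition

variable {u : SZ} {i : ℤ}

lemma sZ_mul_sZ_mul (i : ℤ) (u : SZ) : sZ i * (sZ i * u) = u := by
  rw [← mul_assoc]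
  convert one_mul u
  exact Subtype.ext (Equiv.swap_mul_self _ _)

lemma inversions_sZ_mul_of_lt (h : (u : Equiv.Perm ℤ)⁻¹ i < (u : Equiv.Perm ℤ)⁻¹ (i + 1)) :
    inversions (sZ i * u) =
      insert ((u : Equiv.Perm ℤ)⁻¹ i, (u : Equiv.Perm ℤ)⁻¹ (i + 1)) (inversions u) := by
  ext ⟨x, y⟩
  -- `s_i` preserves the relative order of all values except `i` and `i + 1`
  have hinv (z k : ℤ) : z = (u : Equiv.Perm ℤ)⁻¹ k ↔ (u : Equiv.Perm ℤ) z = k :=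
    Equiv.Perm.eq_inv_iff_eq
  have := hinv x i; have := hinv x (i + 1); have := hinv y i; have := hinv y (i + 1)
  simp only [inversions, Set.mem_insert_iff, Set.mem_ofPred_eq, Prod.mk.injEq, Subgroup.coe_mul, sZ,
    Equiv.Perm.mul_apply]
  rw [Equiv.swap_apply_def, Equiv.swap_apply_def]
  split_ifs <;> omega

lemma lenZ_sZ_mul_of_lt (h : (u : Equiv.Perm ℤ)⁻¹ i < (u : Equiv.Perm ℤ)⁻¹ (i + 1)) :
    lenZ (sZ i * u) = lenZ u + 1 := by
  have hnot : ((u : Equiv.Perm ℤ)⁻¹ i, (u : Equiv.Perm ℤ)⁻¹ (i + 1)) ∉ inversions u := by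
    simp [inversions]
  rw [lenZ_eq_ncard_inversions, lenZ_eq_ncard_inversions, inversions_sZ_mul_of_lt h,
    Set.ncard_insert_of_notMem hnot (inversions_finite u)]

lemma lenZ_sZ_mul_of_gt (h : (u : Equiv.Perm ℤ)⁻¹ (i + 1) < (u : Equiv.Perm ℤ)⁻¹ i) :
    lenZ (sZ i * u) + 1 = lenZ u := by
  have h' : ((sZ i * u : SZ) : Equiv.Perm ℤ)⁻¹ i < ((sZ i * u : SZ) : Equiv.Perm ℤ)⁻¹ (i + 1) := by
    simpa [sZ, Equiv.swap_apply_left, Equiv.swap_apply_right] using h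
  simpa only [sZ_mul_sZ_mul] using (lenZ_sZ_mul_of_lt h').symm

lemma lenZ_sZ_mul_le (i : ℤ) (u : SZ) : lenZ (sZ i * u) ≤ lenZ u + 1 := by
  rcases lt_or_gt_of_ne ((u : Equiv.Perm ℤ)⁻¹.injective.ne (show i ≠ i + 1 by omega)) with h | h
  · exact (lenZ_sZ_mul_of_lt h).le
  · have := lenZ_sZ_mul_of_gt h
    omega

end SimpleTransposition

section ReducedWords

lemma lenZ_prod_le (l : List ℤ) : lenZ (l.map sZ).prod ≤ l.length := by
  induction l with
  | nil => simp [lenZ_one]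
  | cons i t ih =>
    simp only [List.map_cons, List.prod_cons, List.length_cons]
    linarith [lenZ_sZ_mul_le i (t.map sZ).prod]

lemma IsRedWord.of_cons {w : SZ} {i : ℤ} {t : List ℤ} (h : IsRedWord w (i :: t)) :
    IsRedWord (sZ i * w) t ∧
      ((w : Equiv.Perm ℤ)⁻¹ (i + 1), (w : Equiv.Perm ℤ)⁻¹ i) ∈ inversions w := by
  obtain ⟨hlen, hprod⟩ := h
  simp only [List.map_cons, List.prod_cons, List.length_cons] at hprod hlen
  have htail : (t.map sZ).prod = sZ i * w := by rw [← hprod, sZ_mul_sZ_mul]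
  have hle := lenZ_prod_le t
  rw [htail] at hle
  have hdesc : (w : Equiv.Perm ℤ)⁻¹ (i + 1) < (w : Equiv.Perm ℤ)⁻¹ i := by
    refine lt_of_le_of_ne (not_lt.1 fun hlt => ?_) ((w : Equiv.Perm ℤ)⁻¹.injective.ne (by omega))
    have := lenZ_sZ_mul_of_lt hlt
    omega
  have := lenZ_sZ_mul_of_gt hdesc
  exact ⟨⟨by omega, htail⟩, hdesc, by simp⟩

lemma finite_setOf_isRedWord (w : SZ) : {l | IsRedWord w l}.Finite := by
  induction hn : lenZ w generalizing w with
  | zero =>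
    refine (Set.finite_singleton []).subset fun l hl => ?_
    simpa [← List.length_eq_zero_iff, hn] using hl.1
  | succ n ih =>
    set D := {i : ℤ | ((w : Equiv.Perm ℤ)⁻¹ (i + 1), (w : Equiv.Perm ℤ)⁻¹ i) ∈ inversions w}
    have hD : D.Finite := (inversions_finite w).preimage fun i _ j _ hij =>
      (w : Equiv.Perm ℤ)⁻¹.injective (Prod.mk.inj hij).2
    refine (hD.biUnion fun i hi => ((ih (sZ i * w) ?_).image (List.cons i))).subset ?_
    · have := lenZ_sZ_mul_of_gt hi.1
      omega
    · rintro (_ | ⟨i, t⟩) hl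
      · simp [IsRedWord, hn] at hl
      · obtain ⟨ht, hi⟩ := hl.of_cons
        exact Set.mem_biUnion hi ⟨t, ht, rfl⟩

lemma IsRedWord.of_append {w : SZ} {l₁ l₂ : List ℤ} (h : IsRedWord w (l₁ ++ l₂)) :
    IsRedWord (l₁.map sZ).prod l₁ ∧ IsRedWord (l₂.map sZ).prod l₂ := by
  obtain ⟨hlen, hprod⟩ := h
  rw [List.length_append] at hlen
  rw [List.map_append, List.prod_append] at hprod
  have := lenZ_mul_le (l₁.map sZ).prod (l₂.map sZ).prod
  have := lenZ_prod_le l₁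
  have := lenZ_prod_le l₂
  rw [hprod] at *
  exact ⟨⟨by omega, rfl⟩, ⟨by omega, rfl⟩⟩

lemma IsRedWord.append {u v : SZ} {l₁ l₂ : List ℤ} (h₁ : IsRedWord u l₁) (h₂ : IsRedWord v l₂)
    (hlen : lenZ (u * v) = lenZ u + lenZ v) : IsRedWord (u * v) (l₁ ++ l₂) :=
  ⟨by rw [List.length_append, h₁.1, h₂.1, hlen],
    by rw [List.map_append, List.prod_append, h₁.2, h₂.2]⟩

end ReducedWords

section CompatibleSequences

variable {σ τ : Type} [LinearOrder σ] [LinearOrder τ] {a a₁ a₂ : List ℤ} {b b₁ b₂ : List σ}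

lemma compatible_iff : Compatible a b ↔
    a.length = b.length ∧ (a.zip b).IsChain (fun p q => p.2 ≤ q.2 ∧ (p.1 < q.1 → p.2 < q.2)) :=
  Iff.rfl

lemma Compatible.isChain_le (h : Compatible a b) : b.IsChain (· ≤ ·) := by
  rw [← List.map_snd_zip h.1.ge, List.isChain_map]
  exact h.2.imp fun _ _ hpq => hpq.1

lemma compatible_map_iff {f : σ → τ} (hf : StrictMono f) :
    Compatible a (b.map f) ↔ Compatible a b := by
  simp only [compatible_iff, List.length_map, List.zip_map_right, List.isChain_map,
    Prod.map_fst, Prod.map_snd, id, hf.le_iff_le, hf.lt_iff_lt]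

lemma Compatible.of_append (hlen : a₁.length = b₁.length) (h : Compatible (a₁ ++ a₂) (b₁ ++ b₂)) :
    Compatible a₁ b₁ ∧ Compatible a₂ b₂ := by
  obtain ⟨hlen', hchain⟩ := compatible_iff.1 h
  simp only [List.length_append] at hlen'
  rw [List.zip_append hlen, List.isChain_append] at hchain
  exact ⟨⟨hlen, hchain.1⟩, ⟨by omega, hchain.2.1⟩⟩

lemma Compatible.append (h₁ : Compatible a₁ b₁) (h₂ : Compatible a₂ b₂)
    (hlt : ∀ x ∈ b₁, ∀ y ∈ b₂, x < y) : Compatible (a₁ ++ a₂) (b₁ ++ b₂) := by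
  refine compatible_iff.2 ⟨by simp [h₁.1, h₂.1], ?_⟩
  rw [List.zip_append h₁.1, List.isChain_append]
  refine ⟨h₁.2, h₂.2, fun p hp q hq => ?_⟩
  have := hlt _ (List.of_mem_zip (List.mem_of_mem_getLast? hp)).2 _
    (List.of_mem_zip (List.mem_of_mem_head? hq)).2
  exact ⟨this.le, fun _ => this⟩

end CompatibleSequences

section Content

variable {σ τ : Type}

lemma content_append (b₁ b₂ : List σ) : content (b₁ ++ b₂) = content b₁ + content b₂ := by
  simp [content]

lemma content_map (f : σ → τ) (b : List σ) : content (b.map f) = (content b).mapDomain f := by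
  induction b with
  | nil => simp [content]
  | cons x t ih =>
    simp only [content, List.map_cons, List.sum_cons] at ih ⊢
    rw [ih, Finsupp.mapDomain_add, Finsupp.mapDomain_single]

lemma content_eq_toFinsupp [DecidableEq σ] (b : List σ) : content b = Multiset.toFinsupp b := by
  induction b with
  | nil => simp [content]
  | cons x t ih =>
    rw [← Multiset.cons_coe, ← Multiset.singleton_add, map_add, Multiset.toFinsupp_singleton, ← ih]
    simp [content]

lemma finite_setOf_content_eq (m : σ →₀ ℕ) : {b : List σ | content b = m}.Finite := by
  classical
  rcases Set.eq_empty_or_nonempty {b : List σ | content b = m} with he | ⟨b₀, hb₀⟩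
  · exact he ▸ Set.finite_empty
  · refine b₀.permutations.toFinset.finite_toSet.subset fun b hb => ?_
    rw [Set.mem_ofPred_eq, ← hb₀, content_eq_toFinsupp, content_eq_toFinsupp,
      Multiset.toFinsupp.injective.eq_iff, Multiset.coe_eq_coe] at hb
    simpa using hb

end Content

section LexSum

variable {α β : Type}

def lexLefts (b : List (α ⊕ₗ β)) : List α := b.filterMap fun x => (ofLex x).getLeft?

def lexRights (b : List (α ⊕ₗ β)) : List β := b.filterMap fun x => (ofLex x).getRight?

@[simp] lemma lexLefts_append (b₁ b₂ : List (α ⊕ₗ β)) :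
    lexLefts (b₁ ++ b₂) = lexLefts b₁ ++ lexLefts b₂ :=
  List.filterMap_append

@[simp] lemma lexRights_append (b₁ b₂ : List (α ⊕ₗ β)) :
    lexRights (b₁ ++ b₂) = lexRights b₁ ++ lexRights b₂ :=
  List.filterMap_append

@[simp] lemma lexLefts_map_inl (b : List α) : lexLefts (b.map (Sum.inlₗ (β := β))) = b := by
  simp [lexLefts, List.filterMap_map, Function.comp_def]

@[simp] lemma lexLefts_map_inr (b : List β) : lexLefts (b.map (Sum.inrₗ (α := α))) = [] := by
  simp [lexLefts, List.filterMap_map, Function.comp_def]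

@[simp] lemma lexRights_map_inl (b : List α) : lexRights (b.map (Sum.inlₗ (β := β))) = [] := by
  simp [lexRights, List.filterMap_map, Function.comp_def]

@[simp] lemma lexRights_map_inr (b : List β) : lexRights (b.map (Sum.inrₗ (α := α))) = b := by
  simp [lexRights, List.filterMap_map, Function.comp_def]

@[simp] lemma lexLefts_inl_cons (a : α) (t : List (α ⊕ₗ β)) :
    lexLefts (Sum.inlₗ a :: t) = a :: lexLefts t := rfl

@[simp] lemma lexLefts_inr_cons (a : β) (t : List (α ⊕ₗ β)) :
    lexLefts (Sum.inrₗ a :: t) = lexLefts t := rfl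

@[simp] lemma lexRights_inl_cons (a : α) (t : List (α ⊕ₗ β)) :
    lexRights (Sum.inlₗ a :: t) = lexRights t := rfl

@[simp] lemma lexRights_inr_cons (a : β) (t : List (α ⊕ₗ β)) :
    lexRights (Sum.inrₗ a :: t) = a :: lexRights t := rfl

lemma map_inl_lexLefts_append_map_inr_lexRights [LE α] [LE β] {b : List (α ⊕ₗ β)}
    (h : b.IsChain (· ≤ ·)) :
    (lexLefts b).map Sum.inlₗ ++ (lexRights b).map Sum.inrₗ = b := by
  induction b with
  | nil => rfl
  | cons x t ih =>
    have ht := ih h.tail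
    induction x using Lex.rec with | h x => ?_
    rcases x with a | a
    · simpa using ht
    · have hnil : lexLefts t = [] := by
        rcases hl : lexLefts t with _ | ⟨c, _⟩
        · rfl
        · rw [hl, List.map_cons, List.cons_append] at ht
          rw [← ht] at h
          exact absurd (List.isChain_cons_cons.1 h).1 Sum.Lex.not_inr_le_inl
      simpa [hnil] using ht

end LexSum

section DoubledAlphabet

lemma emb1_add_emb2_apply_inl (c d : NP →₀ ℕ) (x : NP) : (emb1 c + emb2 d) (Sum.inlₗ x) = c x := by
  rw [Finsupp.add_apply, emb1, emb2, Finsupp.mapDomain_apply (fun _ _ h => by simpa using h),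
    Finsupp.mapDomain_of_notMem_range _ _ (by simp), add_zero]

lemma emb1_add_emb2_apply_inr (c d : NP →₀ ℕ) (x : NP) : (emb1 c + emb2 d) (Sum.inrₗ x) = d x := by
  rw [Finsupp.add_apply, emb1, emb2, Finsupp.mapDomain_apply (fun _ _ h => by simpa using h),
    Finsupp.mapDomain_of_notMem_range _ _ (by simp), zero_add]

lemma emb1_add_emb2_inj {c₁ c₂ m₁ m₂ : NP →₀ ℕ} (h : emb1 c₁ + emb2 c₂ = emb1 m₁ + emb2 m₂) :
    c₁ = m₁ ∧ c₂ = m₂ := by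
  refine ⟨Finsupp.ext fun x => ?_, Finsupp.ext fun x => ?_⟩
  · simpa only [emb1_add_emb2_apply_inl] using DFunLike.congr_fun h (Sum.inlₗ x)
  · simpa only [emb1_add_emb2_apply_inr] using DFunLike.congr_fun h (Sum.inrₗ x)

lemma content_map_inl_append_map_inr (b₁ b₂ : List NP) :
    content (b₁.map Sum.inlₗ ++ b₂.map Sum.inrₗ : List NP2) =
      emb1 (content b₁) + emb2 (content b₂) := by
  rw [content_append, content_map, content_map]
  rfl

end DoubledAlphabet

section Coproduct

def stanleyWords (σ : Type) [LinearOrder σ] (w : SZ) (m : σ →₀ ℕ) : Set (List ℤ × List σ) :=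
  {p | IsRedWord w p.1 ∧ Compatible p.1 p.2 ∧ content p.2 = m}

lemma stanleyWords_finite (σ : Type) [LinearOrder σ] (w : SZ) (m : σ →₀ ℕ) :
    (stanleyWords σ w m).Finite :=
  ((finite_setOf_isRedWord w).prod (finite_setOf_content_eq m)).subset fun _ h => ⟨h.1, h.2.2⟩

def lengthAdditiveFactorizations (w : SZ) : Set (SZ × SZ) :=
  {p | w = p.1 * p.2 ∧ lenZ w = lenZ p.1 + lenZ p.2}

def splitWord (x : List ℤ × List NP2) : (List ℤ × List NP) × (List ℤ × List NP) :=
  ((x.1.take (lexLefts x.2).length, lexLefts x.2), (x.1.drop (lexLefts x.2).length, lexRights x.2))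

def joinWord (y : (List ℤ × List NP) × (List ℤ × List NP)) : List ℤ × List NP2 :=
  (y.1.1 ++ y.2.1, y.1.2.map Sum.inlₗ ++ y.2.2.map Sum.inrₗ)

variable {w : SZ} {m₁ m₂ : NP →₀ ℕ}

lemma splitWord_mem {x : List ℤ × List NP2} (hx : x ∈ stanleyWords NP2 w (emb1 m₁ + emb2 m₂)) :
    (((splitWord x).1.1.map sZ).prod, ((splitWord x).2.1.map sZ).prod) ∈
      lengthAdditiveFactorizations w ∧
    splitWord x ∈ stanleyWords NP ((splitWord x).1.1.map sZ).prod m₁ ×ˢ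
      stanleyWords NP ((splitWord x).2.1.map sZ).prod m₂ := by
  obtain ⟨a, b⟩ := x
  obtain ⟨hred, hcomp, hcont⟩ : IsRedWord w a ∧ Compatible a b ∧ _ := hx
  simp only [splitWord]
  have hb := map_inl_lexLefts_append_map_inr_lexRights hcomp.isChain_le
  set L := lexLefts b
  set R := lexRights b
  have hk : (a.take L.length).length = (L.map (Sum.inlₗ (β := NP))).length := by
    have := congrArg List.length hb
    simp only [List.length_append, List.length_map] at this
    simp [hcomp.1, ← this]
  rw [← List.take_append_drop L.length a] at hred hcomp
  rw [← hb] at hcomp hcont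
  rw [content_map_inl_append_map_inr] at hcont
  obtain ⟨hc₁, hc₂⟩ := hcomp.of_append hk
  obtain ⟨hr₁, hr₂⟩ := hred.of_append
  obtain ⟨hm₁, hm₂⟩ := emb1_add_emb2_inj hcont
  refine ⟨⟨?_, ?_⟩, ⟨hr₁, (compatible_map_iff Sum.Lex.inl_strictMono).1 hc₁, hm₁⟩,
    ⟨hr₂, (compatible_map_iff Sum.Lex.inr_strictMono).1 hc₂, hm₂⟩⟩
  · simpa [List.prod_append] using hred.2.symm
  · rw [← hred.1, ← hr₁.1, ← hr₂.1, List.length_append]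

lemma joinWord_mem {p : SZ × SZ} (hp : p ∈ lengthAdditiveFactorizations w)
    {y : (List ℤ × List NP) × (List ℤ × List NP)}
    (hy : y ∈ stanleyWords NP p.1 m₁ ×ˢ stanleyWords NP p.2 m₂) :
    joinWord y ∈ stanleyWords NP2 w (emb1 m₁ + emb2 m₂) := by
  obtain ⟨⟨hr₁, hc₁, hm₁⟩, ⟨hr₂, hc₂, hm₂⟩⟩ := hy
  refine ⟨hp.1 ▸ hr₁.append hr₂ (hp.1 ▸ hp.2), ?_, ?_⟩
  · refine ((compatible_map_iff Sum.Lex.inl_strictMono).2 hc₁).append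
      ((compatible_map_iff Sum.Lex.inr_strictMono).2 hc₂) ?_
    simp only [List.mem_map]
    rintro _ ⟨x, -, rfl⟩ _ ⟨y, -, rfl⟩
    exact Sum.Lex.inl_lt_inr x y
  · rw [joinWord, content_map_inl_append_map_inr, hm₁, hm₂]

lemma splitWord_joinWord {y : (List ℤ × List NP) × (List ℤ × List NP)}
    (hlen : y.1.1.length = y.1.2.length) : splitWord (joinWord y) = y := by
  obtain ⟨⟨a₁, b₁⟩, ⟨a₂, b₂⟩⟩ := y
  simp [splitWord, joinWord, ← show a₁.length = b₁.length from hlen]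

def stanleyWordsSplitEquiv (w : SZ) (m₁ m₂ : NP →₀ ℕ) :
    stanleyWords NP2 w (emb1 m₁ + emb2 m₂) ≃
      Σ p : lengthAdditiveFactorizations w,
        ↥(stanleyWords NP p.1.1 m₁ ×ˢ stanleyWords NP p.1.2 m₂) where
  toFun x := ⟨⟨_, (splitWord_mem x.2).1⟩, ⟨splitWord x, (splitWord_mem x.2).2⟩⟩
  invFun y := ⟨joinWord y.2, joinWord_mem y.1.2 y.2.2⟩
  left_inv x := Subtype.ext <| Prod.ext (List.take_append_drop _ _)
    (map_inl_lexLefts_append_map_inr_lexRights x.2.2.1.isChain_le)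
  right_inv := by
    rintro ⟨⟨p, hp⟩, y, hy⟩
    have hsplit := splitWord_joinWord hy.1.2.1.1
    refine Sigma.subtype_ext (Subtype.ext ?_) hsplit
    simp only [hsplit]
    exact Prod.ext hy.1.1.2 hy.2.1.2

end Coproduct

/-- `Δ f` is `f` evaluated on the alphabet `x` followed by the alphabet `y`, so the coefficient
of `x^{m₁} ⊗ y^{m₂}` in `Δ F_w` is a coefficient of `F_w` over `NP2`. -/
theorem stanley_coproduct (w : SZ) (m1 m2 : NP →₀ ℕ) :
    stanleyCoeff NP2 w (emb1 m1 + emb2 m2) =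
      ∑ᶠ p ∈ {p : SZ × SZ | w = p.1 * p.2 ∧ lenZ w = lenZ p.1 + lenZ p.2},
        stanleyCoeff NP p.1 m1 * stanleyCoeff NP p.2 m2 := by
  have : Finite (stanleyWords NP2 w (emb1 m1 + emb2 m2)) := (stanleyWords_finite _ _ _).to_subtype
  have := Finite.of_equiv _ (stanleyWordsSplitEquiv w m1 m2)
  calc stanleyCoeff NP2 w (emb1 m1 + emb2 m2)
      = Nat.card (Σ p : lengthAdditiveFactorizations w,
          ↥(stanleyWords NP p.1.1 m1 ×ˢ stanleyWords NP p.1.2 m2)) :=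
        Nat.card_congr (stanleyWordsSplitEquiv w m1 m2)
    _ = ∑ᶠ p : lengthAdditiveFactorizations w,
          stanleyCoeff NP p.1.1 m1 * stanleyCoeff NP p.1.2 m2 := by
        rw [Nat.card_sigma_eq_finsum]
        congr! 2 with p
        rw [Nat.card_coe_set_eq, Set.ncard_prod]
        rfl
    _ = _ := finsum_set_coe_eq_finsum_mem
          (f := fun p : SZ × SZ => stanleyCoeff NP p.1 m1 * stanleyCoeff NP p.2 m2) _
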